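/- Let H ∈ ℝ^{d×N}, P ∈ ℝ^{d×d} symmetric positive semidefinite, λ > 0, b ∈ ℝ^d, C ∈ ℝ^{q×N}, c ∈ ℝ^q. Let V₁ ∈ ℝ^{N×r} satisfy V₁ᵀV₁ = I_r, H·V₂ = 0 and C·V₂ = 0 where V₂ spans the orthogonal complement of range(V₁) (i.e., V₁V₁ᵀ + V₂V₂ᵀ = I_N). Suppose (g*, μ*) satisfies the KKT conditions of min_g ‖Hg − b‖²_P + λ‖g‖² subject to Cg ≤ c, i.e., 2HᵀP(Hg* − b) + 2λg* + Cᵀμ* = 0, μ*ᵀ(Cg* − c) = 0, Cg* ≤ c, μ* ≥ 0. Then (ḡ* := V₁ᵀg*, μ*) satisfies the KKT conditions of the reduced problem min_{ḡ} ‖HV₁ḡ − b‖²_P + λ‖ḡ‖² subject to CV₁ḡ ≤ c, namely V₁ᵀ(2HᵀP(HV₁ḡ* − b) + 2λV₁ḡ* + Cᵀμ*) = 0, μ*ᵀ(CV₁ḡ* − c) = 0, CV₁ḡ* ≤ c, μ* ≥ 0. -/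
import Mathlib


open Matrix

theorem kkt_transfer (d N r N₂ q : ℕ)
    (H : Matrix (Fin d) (Fin N) ℝ) (P : Matrix (Fin d) (Fin d) ℝ)
    (hPsym : P.IsSymm) (hPpsd : P.PosSemidef)
    (lam : ℝ) (hlam : 0 < lam)
    (b : Fin d → ℝ) (C : Matrix (Fin q) (Fin N) ℝ) (c : Fin q → ℝ)
    (V₁ : Matrix (Fin N) (Fin r) ℝ) (V₂ : Matrix (Fin N) (Fin N₂) ℝ)
    (hV₁ : V₁ᵀ * V₁ = 1) (hHV₂ : H * V₂ = 0) (hCV₂ : C * V₂ = 0)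
    (hcompl : V₁ * V₁ᵀ + V₂ * V₂ᵀ = 1)
    (gstar : Fin N → ℝ) (μstar : Fin q → ℝ)
    (hstat : (2 : ℝ) • (Hᵀ * P).mulVec (H.mulVec gstar - b) + (2 * lam) • gstar
        + Cᵀ.mulVec μstar = 0)
    (hcomp : μstar ⬝ᵥ (C.mulVec gstar - c) = 0)
    (hfeas : ∀ i, C.mulVec gstar i ≤ c i)
    (hdual : ∀ i, 0 ≤ μstar i) :
    let gbar := V₁ᵀ.mulVec gstar
    V₁ᵀ.mulVec ((2 : ℝ) • (Hᵀ * P).mulVec ((H * V₁).mulVec gbar - b)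
        + (2 * lam) • V₁.mulVec gbar + Cᵀ.mulVec μstar) = 0 ∧
    μstar ⬝ᵥ ((C * V₁).mulVec gbar - c) = 0 ∧
    (∀ i, (C * V₁).mulVec gbar i ≤ c i) ∧
    (∀ i, 0 ≤ μstar i) := by
  intro gbar
  have hHproj : H * V₁ * V₁ᵀ = H := by
    have : H * (V₁ * V₁ᵀ + V₂ * V₂ᵀ) = H := by rw [hcompl, Matrix.mul_one]
    rw [Matrix.mul_add, ← Matrix.mul_assoc, ← Matrix.mul_assoc, hHV₂,
      Matrix.zero_mul, add_zero] at this
    exact this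
  have hCproj : C * V₁ * V₁ᵀ = C := by
    have : C * (V₁ * V₁ᵀ + V₂ * V₂ᵀ) = C := by rw [hcompl, Matrix.mul_one]
    rw [Matrix.mul_add, ← Matrix.mul_assoc, ← Matrix.mul_assoc, hCV₂,
      Matrix.zero_mul, add_zero] at this
    exact this
  have hH : (H * V₁).mulVec gbar = H.mulVec gstar := by
    simp only [gbar, Matrix.mulVec_mulVec, hHproj]
  have hC : (C * V₁).mulVec gbar = C.mulVec gstar := by
    simp only [gbar, Matrix.mulVec_mulVec, hCproj]
  refine ⟨?_, by rw [hC]; exact hcomp, by rw [hC]; exact hfeas, hdual⟩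
  have hVg : V₁ᵀ.mulVec (V₁.mulVec gbar) = V₁ᵀ.mulVec gstar := by
    simp only [gbar, Matrix.mulVec_mulVec, ← Matrix.mul_assoc, hV₁, Matrix.one_mul]
  calc V₁ᵀ.mulVec ((2 : ℝ) • (Hᵀ * P).mulVec ((H * V₁).mulVec gbar - b)
        + (2 * lam) • V₁.mulVec gbar + Cᵀ.mulVec μstar)
      = V₁ᵀ.mulVec ((2 : ℝ) • (Hᵀ * P).mulVec (H.mulVec gstar - b))
        + V₁ᵀ.mulVec ((2 * lam) • V₁.mulVec gbar) + V₁ᵀ.mulVec (Cᵀ.mulVec μstar) := by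
        rw [hH, Matrix.mulVec_add, Matrix.mulVec_add]
    _ = V₁ᵀ.mulVec ((2 : ℝ) • (Hᵀ * P).mulVec (H.mulVec gstar - b)
        + (2 * lam) • gstar + Cᵀ.mulVec μstar) := by
        rw [Matrix.mulVec_add, Matrix.mulVec_add, Matrix.mulVec_smul, Matrix.mulVec_smul,
          hVg, Matrix.mulVec_smul]
    _ = 0 := by rw [hstat, Matrix.mulVec_zero]
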